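/- arXiv:1202.0042 — 13 statements merged into one kernel-verified Lean document; each statement's English description precedes it below -/
import Mathlib

section
/- Let N denote the number of uniquely extendible ternary relations on the 4-element set D = Fin 4. For any fixed elements a, b, c ∈ D, the number of uniquely extendible ternary relations R with (a,b,c) ∈ R equals N/4; that is, 4 · |{R uniquely extendible : (a,b,c) ∈ R}| = N. (In other words, any fixed assignment satisfies exactly a proportion 1/4 of all uniquely extendible constraints of size 3 over a domain of size 4.) -/
/-- A ternary relation `R` on `Fin 4` is *uniquely extendible* if fixing any two
coordinates, there is exactly one value for the remaining coordinate putting the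
triple in `R`. -/
def UniqExt (R : Set (Fin 4 × Fin 4 × Fin 4)) : Prop :=
  (∀ a b : Fin 4, ∃! c : Fin 4, (a, b, c) ∈ R) ∧
  (∀ a c : Fin 4, ∃! b : Fin 4, (a, b, c) ∈ R) ∧
  (∀ b c : Fin 4, ∃! a : Fin 4, (a, b, c) ∈ R)

/-- Shift the third coordinate of a ternary relation by `d`. -/
def shiftR (d : Fin 4) (R : Set (Fin 4 × Fin 4 × Fin 4)) : Set (Fin 4 × Fin 4 × Fin 4) :=
  {p | (p.1, p.2.1, p.2.2 + d) ∈ R}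

lemma mem_shiftR {d : Fin 4} {R : Set (Fin 4 × Fin 4 × Fin 4)} {x y z : Fin 4} :
    (x, y, z) ∈ shiftR d R ↔ (x, y, z + d) ∈ R := Iff.rfl

lemma shiftR_shiftR (d e : Fin 4) (h : e + d = 0) (R : Set (Fin 4 × Fin 4 × Fin 4)) :
    shiftR d (shiftR e R) = R := by
  ext ⟨x, y, z⟩
  show (x, y, z + d + e) ∈ R ↔ (x, y, z) ∈ R
  have : z + d + e = z := by
    have : d + e = 0 := by rw [← h]; abel
    rw [add_assoc, this, add_zero]
  rw [this]

lemma uniqExt_shiftR {R : Set (Fin 4 × Fin 4 × Fin 4)} (d : Fin 4) (h : UniqExt R) :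
    UniqExt (shiftR d R) := by
  obtain ⟨h1, h2, h3⟩ := h
  refine ⟨fun x y => ?_, fun x z => ?_, fun y z => ?_⟩
  · obtain ⟨w, hw, hu⟩ := h1 x y
    refine ⟨w - d, ?_, fun z hz => ?_⟩
    · show (x, y, w - d + d) ∈ R
      rwa [sub_add_cancel]
    · exact eq_sub_of_add_eq (hu (z + d) hz)
  · simpa [shiftR] using h2 x (z + d)
  · simpa [shiftR] using h3 y (z + d)

/-- The shift by `c - c'` gives a bijection between UE relations containing
`(a,b,c)` and UE relations containing `(a,b,c')`. -/
def fiberEquiv (a b c c' : Fin 4) :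
    {R : Set (Fin 4 × Fin 4 × Fin 4) // UniqExt R ∧ (a, b, c) ∈ R} ≃
      {R : Set (Fin 4 × Fin 4 × Fin 4) // UniqExt R ∧ (a, b, c') ∈ R} where
  toFun R := ⟨shiftR (c - c') R.1, uniqExt_shiftR _ R.2.1, by
    show (a, b, c' + (c - c')) ∈ R.1
    have : c' + (c - c') = c := by abel
    rw [this]; exact R.2.2⟩
  invFun R := ⟨shiftR (c' - c) R.1, uniqExt_shiftR _ R.2.1, by
    show (a, b, c + (c' - c)) ∈ R.1
    have : c + (c' - c) = c' := by abel
    rw [this]; exact R.2.2⟩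
  left_inv R := Subtype.ext (shiftR_shiftR _ _ (by abel) _)
  right_inv R := Subtype.ext (shiftR_shiftR _ _ (by abel) _)

/-- Any fixed assignment satisfies exactly a proportion `1/4` of all uniquely
extendible constraints of size 3 over a domain of size 4. -/
theorem quarter_of_ue_constraints (a b c : Fin 4) :
    4 * Nat.card {R : Set (Fin 4 × Fin 4 × Fin 4) // UniqExt R ∧ (a, b, c) ∈ R} =
      Nat.card {R : Set (Fin 4 × Fin 4 × Fin 4) // UniqExt R} := by
  classical
  -- the map sending a UE relation to its unique value above (a,b)
  set f : {R : Set (Fin 4 × Fin 4 × Fin 4) // UniqExt R} → Fin 4 :=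
    fun R => Fintype.choose _ (R.2.1 a b) with hf
  have hfspec : ∀ R : {R // UniqExt R}, (a, b, f R) ∈ R.1 :=
    fun R => Fintype.choose_spec _ (R.2.1 a b)
  have hfiber : ∀ c' : Fin 4,
      {x : {R // UniqExt R} // f x = c'} ≃
        {R : Set (Fin 4 × Fin 4 × Fin 4) // UniqExt R ∧ (a, b, c') ∈ R} := by
    intro c'
    refine ⟨fun x => ⟨x.1.1, x.1.2, by have := hfspec x.1; rwa [x.2] at this⟩,
      fun R => ⟨⟨R.1, R.2.1⟩, (R.2.1.1 a b).unique (hfspec ⟨R.1, R.2.1⟩) R.2.2⟩,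
      fun x => Subtype.ext (Subtype.ext rfl), fun R => Subtype.ext rfl⟩
  rw [Nat.card_eq_fintype_card, Nat.card_eq_fintype_card]
  symm
  calc Fintype.card {R : Set (Fin 4 × Fin 4 × Fin 4) // UniqExt R}
      = Fintype.card (Σ c' : Fin 4, {x : {R // UniqExt R} // f x = c'}) :=
        Fintype.card_congr (Equiv.sigmaFiberEquiv f).symm
    _ = ∑ c' : Fin 4, Fintype.card {x : {R // UniqExt R} // f x = c'} :=
        Fintype.card_sigma
    _ = ∑ _c' : Fin 4,
          Fintype.card {R : Set (Fin 4 × Fin 4 × Fin 4) // UniqExt R ∧ (a, b, c) ∈ R} := by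
        refine Finset.sum_congr rfl fun c' _ => ?_
        exact Fintype.card_congr ((hfiber c').trans (fiberEquiv a b c' c))
    _ = 4 * Fintype.card {R : Set (Fin 4 × Fin 4 × Fin 4) // UniqExt R ∧ (a, b, c) ∈ R} := by
        simp [Finset.sum_const, Finset.card_univ]
end

section
/- Let N denote the number of uniquely extendible ternary relations on the 4-element set D = Fin 4. For any fixed a, b, b', c, c' ∈ D with b ≠ b' and c ≠ c', the number of uniquely extendible ternary relations R with both (a,b,c) ∈ R and (a,b',c') ∈ R equals N/12; that is, 12 · |{R uniquely extendible : (a,b,c) ∈ R and (a,b',c') ∈ R}| = N. (Two assignments that agree on the first variable of a clause but differ on the other two simultaneously satisfy exactly a proportion 1/12 of all uniquely extendible constraints.) -/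
abbrev Tri := Fin 4 × Fin 4 × Fin 4

def permAct (τ : Equiv.Perm (Fin 4)) (R : Set Tri) : Set Tri :=
  {p | (p.1, p.2.1, τ.symm p.2.2) ∈ R}

lemma permAct_permAct (τ : Equiv.Perm (Fin 4)) (R : Set Tri) :
    permAct τ⁻¹ (permAct τ R) = R := by
  ext ⟨x, y, z⟩; simp [permAct, Equiv.Perm.inv_def]

lemma permAct_permAct' (τ : Equiv.Perm (Fin 4)) (R : Set Tri) :
    permAct τ (permAct τ⁻¹ R) = R := by
  ext ⟨x, y, z⟩; simp [permAct, Equiv.Perm.inv_def]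

lemma uniqExt_permAct (τ : Equiv.Perm (Fin 4)) {R : Set Tri} (h : UniqExt R) :
    UniqExt (permAct τ R) := by
  obtain ⟨h1, h2, h3⟩ := h
  refine ⟨fun a b => ?_, fun a c => ?_, fun b c => ?_⟩
  · obtain ⟨c₀, hc₀, hu⟩ := h1 a b
    refine ⟨τ c₀, by simpa [permAct] using hc₀, fun y hy => ?_⟩
    have := hu _ hy
    rw [← this, Equiv.apply_symm_apply]
  · simpa [permAct] using h2 a (τ.symm c)
  · simpa [permAct] using h3 b (τ.symm c)

noncomputable def rowPermFun (a : Fin 4) (R : Set Tri) (h : UniqExt R) : Fin 4 → Fin 4 :=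
  fun x => (h.1 a x).choose

lemma rowPermFun_spec (a : Fin 4) (R : Set Tri) (h : UniqExt R) (x : Fin 4) :
    (a, x, rowPermFun a R h x) ∈ R := (h.1 a x).choose_spec.1

lemma rowPermFun_eq (a : Fin 4) (R : Set Tri) (h : UniqExt R) {x z : Fin 4}
    (hz : (a, x, z) ∈ R) : rowPermFun a R h x = z :=
  ((h.1 a x).choose_spec.2 z hz).symm

noncomputable def rowPerm (a : Fin 4) (R : Set Tri) (h : UniqExt R) : Equiv.Perm (Fin 4) :=
  Equiv.ofBijective (rowPermFun a R h) (by
    rw [Finite.injective_iff_bijective.symm]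
    intro x₁ x₂ he
    have s₁ := rowPermFun_spec a R h x₁
    have s₂ := rowPermFun_spec a R h x₂
    rw [he] at s₁
    obtain ⟨b₀, _, hu⟩ := h.2.1 a (rowPermFun a R h x₂)
    exact (hu _ s₁).trans (hu _ s₂).symm)

lemma rowPerm_spec (a : Fin 4) (R : Set Tri) (h : UniqExt R) (x : Fin 4) :
    (a, x, rowPerm a R h x) ∈ R := rowPermFun_spec a R h x

lemma rowPerm_eq (a : Fin 4) (R : Set Tri) (h : UniqExt R) {x z : Fin 4}
    (hz : (a, x, z) ∈ R) : rowPerm a R h x = z := rowPermFun_eq a R h hz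

example : Fintype.card {σ : Equiv.Perm (Fin 4) // σ 0 = 0 ∧ σ 1 = 1} = 2 := by decide

/-- Fiber over σ is equinumerous to the fiber over the identity. -/
noncomputable def fibEquiv (a : Fin 4) (σ : Equiv.Perm (Fin 4)) :
    {R : Set Tri // UniqExt R ∧ ∀ x, (a, x, σ x) ∈ R} ≃
      {R : Set Tri // UniqExt R ∧ ∀ x, (a, x, x) ∈ R} where
  toFun := fun ⟨R, hR, hσ⟩ => ⟨permAct σ⁻¹ R, uniqExt_permAct _ hR, fun x => by
    simpa [permAct, Equiv.Perm.inv_def] using hσ x⟩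
  invFun := fun ⟨R, hR, h1⟩ => ⟨permAct σ R, uniqExt_permAct _ hR, fun x => by
    simpa [permAct] using h1 x⟩
  left_inv := fun ⟨R, hR, hσ⟩ => Subtype.ext (permAct_permAct' σ R)
  right_inv := fun ⟨R, hR, h1⟩ => Subtype.ext (permAct_permAct σ R)

noncomputable def sigEquiv (a : Fin 4) :
    {R : Set Tri // UniqExt R} ≃
      Σ σ : Equiv.Perm (Fin 4), {R : Set Tri // UniqExt R ∧ ∀ x, (a, x, σ x) ∈ R} where
  toFun := fun ⟨R, h⟩ => ⟨rowPerm a R h, ⟨R, h, fun x => rowPerm_spec a R h x⟩⟩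
  invFun := fun ⟨_, ⟨R, h, _⟩⟩ => ⟨R, h⟩
  left_inv := fun ⟨R, h⟩ => rfl
  right_inv := fun ⟨σ, ⟨R, h, hσ⟩⟩ => by
    have : rowPerm a R h = σ := Equiv.ext fun x => rowPerm_eq a R h (hσ x)
    subst this
    rfl

noncomputable def sigEquiv2 (a b b' c c' : Fin 4) :
    {R : Set Tri // UniqExt R ∧ (a, b, c) ∈ R ∧ (a, b', c') ∈ R} ≃
      Σ σ : {σ : Equiv.Perm (Fin 4) // σ b = c ∧ σ b' = c'},
        {R : Set Tri // UniqExt R ∧ ∀ x, (a, x, σ.1 x) ∈ R} where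
  toFun := fun ⟨R, h, h1, h2⟩ =>
    ⟨⟨rowPerm a R h, rowPerm_eq a R h h1, rowPerm_eq a R h h2⟩,
      ⟨R, h, fun x => rowPerm_spec a R h x⟩⟩
  invFun := fun ⟨σ, ⟨R, h, hσ⟩⟩ => ⟨R, h, σ.2.1 ▸ hσ b, σ.2.2 ▸ hσ b'⟩
  left_inv := fun ⟨R, h, h1, h2⟩ => rfl
  right_inv := fun ⟨⟨σ, hσp⟩, ⟨R, h, hσ⟩⟩ => by
    have : rowPerm a R h = σ := Equiv.ext fun x => rowPerm_eq a R h (hσ x)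
    subst this
    rfl

lemma exists_perm_pair {x y : Fin 4} (h : x ≠ y) :
    ∃ β : Equiv.Perm (Fin 4), β 0 = x ∧ β 1 = y := by
  set y' := Equiv.swap 0 x y with hy'
  have hy'0 : y' ≠ 0 := by
    intro h0
    apply h
    have := congrArg (Equiv.swap 0 x) h0
    rw [hy'] at this
    simpa using this.symm
  refine ⟨(Equiv.swap 1 y').trans (Equiv.swap 0 x), ?_, ?_⟩
  · have : Equiv.swap 1 y' 0 = 0 :=
      Equiv.swap_apply_of_ne_of_ne (by decide) (Ne.symm hy'0)
    simp [Equiv.trans_apply, this]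
  · simp [Equiv.trans_apply, hy', Equiv.swap_apply_self]

lemma card_pair_perms {b b' c c' : Fin 4} (hb : b ≠ b') (hc : c ≠ c') :
    Nat.card {σ : Equiv.Perm (Fin 4) // σ b = c ∧ σ b' = c'} = 2 := by
  obtain ⟨β, hβ0, hβ1⟩ := exists_perm_pair hb
  obtain ⟨γ, hγ0, hγ1⟩ := exists_perm_pair hc
  have e : {σ : Equiv.Perm (Fin 4) // σ b = c ∧ σ b' = c'} ≃
      {σ : Equiv.Perm (Fin 4) // σ 0 = 0 ∧ σ 1 = 1} := by
    refine ⟨fun ⟨σ, h1, h2⟩ => ⟨γ⁻¹ * σ * β, ?_, ?_⟩,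
            fun ⟨σ, h1, h2⟩ => ⟨γ * σ * β⁻¹, ?_, ?_⟩, ?_, ?_⟩
    · simp [Equiv.Perm.mul_apply, hβ0, h1, ← hγ0]
    · simp [Equiv.Perm.mul_apply, hβ1, h2, ← hγ1]
    · simp [Equiv.Perm.mul_apply, ← hβ0, h1, hγ0]
    · simp [Equiv.Perm.mul_apply, ← hβ1, h2, hγ1]
    · intro ⟨σ, h1, h2⟩; ext z; simp [Equiv.Perm.mul_apply]
    · intro ⟨σ, h1, h2⟩; ext z; simp [Equiv.Perm.mul_apply]
  rw [Nat.card_congr e, Nat.card_eq_fintype_card]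
  decide

/-- Two assignments that agree on the first variable of a clause but differ on
the other two simultaneously satisfy exactly a proportion `1/12` of all uniquely
extendible constraints. -/
theorem twelfth_of_ue_constraints (a b b' c c' : Fin 4) (hb : b ≠ b') (hc : c ≠ c') :
    12 * Nat.card {R : Set (Fin 4 × Fin 4 × Fin 4) //
        UniqExt R ∧ (a, b, c) ∈ R ∧ (a, b', c') ∈ R} =
      Nat.card {R : Set (Fin 4 × Fin 4 × Fin 4) // UniqExt R} := by
  classical
  set k := Nat.card {R : Set Tri // UniqExt R ∧ ∀ x, (a, x, x) ∈ R} with hk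
  have hS : Nat.card {R : Set Tri // UniqExt R} = 24 * k := by
    have e := (sigEquiv a).trans
      ((Equiv.sigmaCongrRight (fun σ => fibEquiv a σ)).trans
        (Equiv.sigmaEquivProd _ _))
    rw [Nat.card_congr e, Nat.card_prod, hk]
    congr 1
    rw [Nat.card_eq_fintype_card]
    simp [Fintype.card_perm]
    rfl
  have hA : Nat.card {R : Set Tri // UniqExt R ∧ (a, b, c) ∈ R ∧ (a, b', c') ∈ R}
      = 2 * k := by
    have e := (sigEquiv2 a b b' c c').trans
      ((Equiv.sigmaCongrRight (fun σ : {σ : Equiv.Perm (Fin 4) // σ b = c ∧ σ b' = c'} => fibEquiv a σ.1)).trans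
        (Equiv.sigmaEquivProd _ _))
    rw [Nat.card_congr e, Nat.card_prod, hk, card_pair_perms hb hc]
  rw [hA, hS]
  ring
end

section
/- Let k ≥ 1 and let S be a set of vectors v : Fin k → ZMod 2 that is uniquely extendible, meaning: for every coordinate i ∈ Fin k and every assignment of values in ZMod 2 to the other k−1 coordinates, there is exactly one value for coordinate i making the resulting vector lie in S. Then either S = { v : ∑_{i} v i = 0 } or S = { v : ∑_{i} v i = 1 }. In particular there are exactly two uniquely extendible k-ary constraints over a domain of size 2, namely the two parity (XOR) constraints. -/
/-- Over the domain `ZMod 2`, the only uniquely extendible `k`-ary constraints are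
the two parity (XOR) constraints. -/
theorem ue_boolean_constraints_are_parity (k : ℕ) (hk : 1 ≤ k)
    (S : Set (Fin k → ZMod 2))
    (hS : ∀ (i : Fin k) (v : Fin k → ZMod 2),
      ∃! a : ZMod 2, Function.update v i a ∈ S) :
    S = {v : Fin k → ZMod 2 | ∑ i, v i = 0} ∨
      S = {v : Fin k → ZMod 2 | ∑ i, v i = 1} := by
  classical
  have hne : ∀ a b : ZMod 2, a ≠ b → a = b + 1 := by decide
  have step : ∀ (v : Fin k → ZMod 2) (i : Fin k),
      Function.update v i (v i + 1) ∈ S ↔ v ∉ S := by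
    intro v i
    obtain ⟨a, ha, hu⟩ := hS i v
    constructor
    · intro h hv
      have h1 := hu _ h
      have h2 := hu (v i) (by show Function.update v i (v i) ∈ S; rwa [Function.update_eq_self])
      rw [h2] at h1
      exact one_ne_zero (by linear_combination h1)
    · intro hv
      have hav : a ≠ v i := by
        intro h
        rw [h] at ha
        exact hv (by simpa [Function.update_eq_self] using ha)
      rw [← hne a (v i) hav]
      exact ha
  have key : ∀ (n : ℕ) (v : Fin k → ZMod 2),
      (Finset.univ.filter fun i => v i ≠ 0).card = n →
      ((v ∈ S ↔ (0 : Fin k → ZMod 2) ∈ S) ↔ ∑ i, v i = 0) := by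
    intro n
    induction n with
    | zero =>
      intro v hv
      have hz : v = 0 := by
        funext i
        by_contra h
        have : i ∈ Finset.univ.filter fun i => v i ≠ 0 := by
          simp only [Finset.mem_filter, Finset.mem_univ, true_and]
          simpa using h
        rw [Finset.card_eq_zero] at hv
        simp [hv] at this
      subst hz
      simp
    | succ n ih =>
      intro v hv
      have hne' : (Finset.univ.filter fun i => v i ≠ 0).Nonempty := by
        rw [← Finset.card_pos, hv]; omega
      obtain ⟨i, hi⟩ := hne'
      have hvi : v i = 1 := by
        have : v i ≠ 0 := by simpa using hi
        simpa using hne _ _ this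
      set w := Function.update v i 0 with hw
      have hvw : v = Function.update w i (w i + 1) := by
        funext j
        by_cases h : j = i
        · subst h
          simp [hw, hvi]
        · simp [hw, Function.update_of_ne h]
      have hcard : (Finset.univ.filter fun j => w j ≠ 0).card = n := by
        have : (Finset.univ.filter fun j => w j ≠ 0)
            = (Finset.univ.filter fun j => v j ≠ 0).erase i := by
          ext j
          by_cases h : j = i
          · subst h; simp [hw]
          · simp [hw, Function.update_of_ne h, h]
        rw [this, Finset.card_erase_of_mem hi, hv]
        omega
      have ihw := ih w hcard
      have hsum : ∑ j, v j = 1 + ∑ j, w j := by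
        have h1 : ∑ j, v j = v i + ∑ j ∈ Finset.univ.erase i, v j := by
          rw [Finset.add_sum_erase _ _ (Finset.mem_univ i)]
        have h2 : ∑ j, w j = w i + ∑ j ∈ Finset.univ.erase i, w j := by
          rw [Finset.add_sum_erase _ _ (Finset.mem_univ i)]
        have h3 : ∑ j ∈ Finset.univ.erase i, v j = ∑ j ∈ Finset.univ.erase i, w j := by
          apply Finset.sum_congr rfl
          intro j hj
          have : j ≠ i := Finset.ne_of_mem_erase hj
          simp [hw, Function.update_of_ne this]
        rw [h1, h2, h3, hvi]
        simp [hw]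
      have hmem : v ∈ S ↔ w ∉ S := by
        rw [hvw]; exact step w i
      have hzo : ∀ a : ZMod 2, (1 + a = 0 ↔ ¬ a = 0) := by decide
      rw [hmem, hsum, hzo]
      tauto
  by_cases h0 : (0 : Fin k → ZMod 2) ∈ S
  · left
    ext v
    have := key _ v rfl
    simp only [Set.mem_setOf_eq]
    tauto
  · right
    ext v
    have := key _ v rfl
    have hzo : ∀ a : ZMod 2, (¬ a = 0 ↔ a = 1) := by decide
    simp only [Set.mem_setOf_eq]
    rw [← hzo]
    tauto
end

section
/- Define g(w) = w(e^w − 1)/(e^w − 1 − w) for w > 0. Then g is strictly increasing on (0, ∞), g(w) tends to 2 as w tends to 0 from the right, and g(w) tends to +∞ as w tends to +∞. Consequently, for every real s > 2 there is exactly one w > 0 with g(w) = s. -/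
open Real Filter Set

lemma D_pos {w : ℝ} (hw : 0 < w) : 0 < Real.exp w - 1 - w := by
  have := Real.add_one_lt_exp (x := w) (ne_of_gt hw)
  linarith

lemma E_pos {w : ℝ} (hw : 0 < w) : 0 < Real.exp w - 1 := by
  have := D_pos hw; linarith

lemma key_ineq {w : ℝ} (hw : 0 < w) : w * Real.exp (w / 2) < Real.exp w - 1 := by
  have h : w / 2 < Real.sinh (w / 2) := (Real.self_lt_sinh_iff).mpr (by linarith)
  rw [Real.sinh_eq] at h
  have hp : 0 < Real.exp (w / 2) := Real.exp_pos _
  have h2 : w < Real.exp (w / 2) - Real.exp (-(w / 2)) := by linarith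
  have := mul_lt_mul_of_pos_right h2 hp
  rw [sub_mul, ← Real.exp_add, ← Real.exp_add] at this
  simp at this
  convert this using 2 <;> ring_nf

noncomputable def hfun (w : ℝ) : ℝ := w⁻¹ - (Real.exp w - 1)⁻¹

lemma hfun_deriv {w : ℝ} (hw : 0 < w) :
    HasDerivAt hfun (-(1 / w ^ 2) + Real.exp w / (Real.exp w - 1) ^ 2) w := by
  have h1 : HasDerivAt (fun x : ℝ => x⁻¹) (-(1 / w ^ 2)) w := by
    have := (hasDerivAt_id w).inv (ne_of_gt hw)
    simpa [neg_div] using hasDerivAt_inv (ne_of_gt hw)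
  have h2 : HasDerivAt (fun x : ℝ => Real.exp x - 1) (Real.exp w) w := by
    simpa using (Real.hasDerivAt_exp w).sub_const 1
  have h3 := h2.inv (ne_of_gt (E_pos hw))
  have := h1.sub h3
  convert this using 1
  · rfl
  · rfl
  · rfl
  · ring

lemma hfun_deriv_neg {w : ℝ} (hw : 0 < w) :
    -(1 / w ^ 2) + Real.exp w / (Real.exp w - 1) ^ 2 < 0 := by
  have hE := E_pos hw
  have hk := key_ineq hw
  have hsq : w ^ 2 * Real.exp w < (Real.exp w - 1) ^ 2 := by
    have h1 : 0 < w * Real.exp (w / 2) := by positivity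
    calc w ^ 2 * Real.exp w = (w * Real.exp (w / 2)) * (w * Real.exp (w / 2)) := by
          rw [show w * rexp (w / 2) * (w * rexp (w / 2)) = w ^ 2 * (rexp (w/2) * rexp (w/2)) by ring, ← Real.exp_add]
          norm_num
      _ < (Real.exp w - 1) * (Real.exp w - 1) := by
          exact mul_lt_mul'' hk hk h1.le h1.le
      _ = (Real.exp w - 1) ^ 2 := by ring
  rw [neg_add_lt_iff_lt_add, add_zero, div_lt_div_iff₀ (by positivity) (by positivity)]
  nlinarith

lemma hfun_anti : StrictAntiOn hfun (Set.Ioi 0) := by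
  apply strictAntiOn_of_deriv_neg (convex_Ioi 0)
  · intro x hx
    exact ((hfun_deriv hx).differentiableAt).continuousAt.continuousWithinAt
  · intro x hx
    rw [interior_Ioi] at hx
    rw [(hfun_deriv hx).deriv]
    exact hfun_deriv_neg hx

lemma hfun_pos {w : ℝ} (hw : 0 < w) : 0 < hfun w := by
  have hD := D_pos hw
  have hE := E_pos hw
  unfold hfun
  rw [sub_pos, inv_lt_inv₀ hE hw]
  linarith

lemma g_eq {w : ℝ} (hw : 0 < w) :
    w * (Real.exp w - 1) / (Real.exp w - 1 - w) = (hfun w)⁻¹ := by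
  have hD := D_pos hw
  have hE := E_pos hw
  unfold hfun
  rw [eq_comm, inv_eq_iff_eq_inv, eq_comm, inv_div]
  field_simp

lemma g_mono : StrictMonoOn (fun w : ℝ => w * (Real.exp w - 1) / (Real.exp w - 1 - w))
    (Set.Ioi 0) := by
  intro x hx y hy hxy
  simp only
  rw [g_eq hx, g_eq hy]
  exact inv_strictAnti₀ (hfun_pos hy) (hfun_anti hx hy hxy)

lemma g_split {w : ℝ} (hw : 0 < w) :
    w * (Real.exp w - 1) / (Real.exp w - 1 - w)
      = w + ((Real.exp w - 1 - w) / w ^ 2)⁻¹ := by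
  have hD := D_pos hw
  rw [inv_div]
  field_simp
  ring

lemma D_approx {w : ℝ} (hw : 0 < w) (hw1 : w ≤ 1) :
    |Real.exp w - 1 - w - w ^ 2 / 2| ≤ 2 / 9 * w ^ 3 := by
  have h := Real.exp_bound (x := w) (by rw [abs_of_pos hw]; exact hw1) (n := 3) (by norm_num)
  have hs : ∑ i ∈ Finset.range 3, w ^ i / (Nat.factorial i : ℝ) = 1 + w + w ^ 2 / 2 := by
    norm_num [Finset.sum_range_succ, Nat.factorial]
  rw [hs, abs_of_pos hw] at h
  calc |Real.exp w - 1 - w - w ^ 2 / 2| = |Real.exp w - (1 + w + w ^ 2 / 2)| := by ring_nf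
    _ ≤ w ^ 3 * ((Nat.succ 3 : ℕ) / ((Nat.factorial 3 : ℕ) * (3:ℕ))) := h
    _ ≤ 2 / 9 * w ^ 3 := by norm_num [Nat.factorial]; linarith

lemma Dq_tendsto :
    Filter.Tendsto (fun w : ℝ => (Real.exp w - 1 - w) / w ^ 2)
      (nhdsWithin 0 (Set.Ioi 0)) (nhds (1 / 2)) := by
  have key : Filter.Tendsto (fun w : ℝ => (Real.exp w - 1 - w) / w ^ 2 - 1 / 2)
      (nhdsWithin 0 (Set.Ioi 0)) (nhds 0) := by
    apply squeeze_zero_norm' (a := fun w : ℝ => 2 / 9 * w)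
    · filter_upwards [self_mem_nhdsWithin,
        nhdsWithin_le_nhds (Iic_mem_nhds (show (0:ℝ) < 1 by norm_num))] with w hw hw1
      have hw : (0:ℝ) < w := hw
      have hw1 : w ≤ 1 := hw1
      have h := D_approx hw hw1
      have hw2 : (0:ℝ) < w ^ 2 := by positivity
      have hsplit : (Real.exp w - 1 - w) / w ^ 2 - 1 / 2
          = (Real.exp w - 1 - w - w ^ 2 / 2) / w ^ 2 := by
        rw [eq_div_iff hw2.ne', sub_mul, div_mul_cancel₀ _ hw2.ne']
        ring
      rw [Real.norm_eq_abs, hsplit, abs_div, abs_of_pos hw2, div_le_iff₀ hw2]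
      calc |Real.exp w - 1 - w - w ^ 2 / 2| ≤ 2 / 9 * w ^ 3 := h
        _ = 2 / 9 * w * w ^ 2 := by ring
    · have : Filter.Tendsto (fun w : ℝ => 2 / 9 * w) (nhds 0) (nhds (2 / 9 * 0)) :=
        (tendsto_id.const_mul _)
      simpa using this.mono_left nhdsWithin_le_nhds
  have := key.add_const (1 / 2)
  simpa using this

lemma g_tendsto_zero :
    Filter.Tendsto (fun w : ℝ => w * (Real.exp w - 1) / (Real.exp w - 1 - w))
      (nhdsWithin 0 (Set.Ioi 0)) (nhds 2) := by
  have h1 : Filter.Tendsto (fun w : ℝ => w + ((Real.exp w - 1 - w) / w ^ 2)⁻¹)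
      (nhdsWithin 0 (Set.Ioi 0)) (nhds 2) := by
    have ha : Filter.Tendsto (fun w : ℝ => w) (nhdsWithin 0 (Set.Ioi 0)) (nhds 0) :=
      tendsto_id.mono_left nhdsWithin_le_nhds
    have hb := (Dq_tendsto.inv₀ (by norm_num))
    have := ha.add hb
    norm_num [inv_div] at this ⊢
    exact this
  apply h1.congr'
  filter_upwards [self_mem_nhdsWithin] with w hw
  exact (g_split hw).symm

lemma g_tendsto_atTop :
    Filter.Tendsto (fun w : ℝ => w * (Real.exp w - 1) / (Real.exp w - 1 - w))
      Filter.atTop Filter.atTop := by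
  apply tendsto_atTop_mono' _ _ tendsto_id
  filter_upwards [Filter.eventually_gt_atTop (0:ℝ)] with w hw
  rw [g_split hw]
  have hD := D_pos hw
  have : 0 ≤ ((Real.exp w - 1 - w) / w ^ 2)⁻¹ := by positivity
  simp only [id]
  linarith

/-- Properties of `g(w) = w(e^w - 1)/(e^w - 1 - w)` on `(0, ∞)`: it is strictly
increasing, tends to `2` as `w → 0⁺`, tends to `+∞` as `w → +∞`, and hence
takes every value `s > 2` exactly once on `(0, ∞)`. -/
theorem g_strictMono_limits_and_unique_solution :
    StrictMonoOn (fun w : ℝ => w * (Real.exp w - 1) / (Real.exp w - 1 - w)) (Set.Ioi 0) ∧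
    Filter.Tendsto (fun w : ℝ => w * (Real.exp w - 1) / (Real.exp w - 1 - w))
      (nhdsWithin 0 (Set.Ioi 0)) (nhds 2) ∧
    Filter.Tendsto (fun w : ℝ => w * (Real.exp w - 1) / (Real.exp w - 1 - w))
      Filter.atTop Filter.atTop ∧
    ∀ s : ℝ, 2 < s →
      ∃! w : ℝ, 0 < w ∧ w * (Real.exp w - 1) / (Real.exp w - 1 - w) = s := by
  refine ⟨g_mono, g_tendsto_zero, g_tendsto_atTop, ?_⟩
  intro s hs
  set g := fun w : ℝ => w * (Real.exp w - 1) / (Real.exp w - 1 - w) with hg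
  obtain ⟨a, hgas, ha⟩ :
      ∃ a, g a < s ∧ a ∈ Set.Ioi (0:ℝ) :=
    ((g_tendsto_zero.eventually_lt_const hs).and self_mem_nhdsWithin).exists
  obtain ⟨b, hgbs, hab⟩ : ∃ b, s < g b ∧ a < b :=
    ((g_tendsto_atTop.eventually_gt_atTop s).and (Filter.eventually_gt_atTop a)).exists
  have ha' : (0:ℝ) < a := ha
  have hsub : Set.Icc a b ⊆ Set.Ioi 0 := fun x hx => lt_of_lt_of_le ha' hx.1
  have hcont : ContinuousOn g (Set.Icc a b) := by
    apply ContinuousOn.div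
    · exact (continuousOn_id.mul ((Real.continuous_exp.continuousOn).sub continuousOn_const))
    · exact ((Real.continuous_exp.continuousOn).sub continuousOn_const).sub continuousOn_id
    · intro x hx
      exact (D_pos (hsub hx)).ne'
  have hivt := intermediate_value_Icc hab.le hcont
  obtain ⟨w, hw, hgw⟩ := hivt ⟨hgas.le, hgbs.le⟩
  refine ⟨w, ⟨lt_of_lt_of_le ha' hw.1, hgw⟩, ?_⟩
  rintro y ⟨hy, hgy⟩
  exact g_mono.injOn (Set.mem_Ioi.2 hy) (hsub hw) (hgy.trans hgw.symm)
end

section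
/- Let c ≥ 2/3 be a real number and let x > 0 satisfy 3c = x(e^x − 1)/(e^x − 1 − x) (equivalently, 3c(e^x − 1 − x) = x(e^x − 1)). Then 3c − 2 < x < 3c. -/
/-- If `c ≥ 2/3` and `x > 0` satisfies `3c = x(e^x - 1)/(e^x - 1 - x)`, then
`3c - 2 < x < 3c`. -/
theorem x_sandwich (c x : ℝ) (hc : 2 / 3 ≤ c) (hx : 0 < x)
    (heq : 3 * c = x * (Real.exp x - 1) / (Real.exp x - 1 - x)) :
    3 * c - 2 < x ∧ x < 3 * c := by
  have hD : 0 < Real.exp x - 1 - x := by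
    nlinarith [Real.add_one_lt_exp (ne_of_gt hx)]
  have heq' : 3 * c * (Real.exp x - 1 - x) = x * (Real.exp x - 1) := by
    field_simp at heq; linarith
  have hcube : 1 + x + x ^ 2 / 2 + x ^ 3 / 6 ≤ Real.exp x := by
    have := Real.sum_le_exp_of_nonneg hx.le 4
    norm_num [Finset.sum_range_succ, Nat.factorial] at this
    nlinarith [this]
  constructor
  · nlinarith [sq_nonneg x, pow_pos hx 3]
  · nlinarith [sq_nonneg x, mul_pos hx hx]
end

section
/- For every real w > 0, Υ(w) ≥ w(ln w − 1); that is, (w(e^w − 1)/(e^w − 1 − w))·ln w − ln(e^w − 1 − w) ≥ w ln w − w. -/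
/-- For `w > 0`, `Υ(w) = (w(e^w-1)/(e^w-1-w))·ln w - ln(e^w-1-w)`. -/
noncomputable def Upsilon (w : ℝ) : ℝ :=
  (w * (Real.exp w - 1) / (Real.exp w - 1 - w)) * Real.log w -
    Real.log (Real.exp w - 1 - w)

/-- For every `w > 0`, `Υ(w) ≥ w(ln w - 1)`. -/
theorem upsilon_lower_bound (w : ℝ) (hw : 0 < w) :
    w * (Real.log w - 1) ≤ Upsilon w := by
  set A := Real.exp w - 1 - w with hAdef
  have hexp : w + 1 < Real.exp w := Real.add_one_lt_exp hw.ne'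
  have hA : 0 < A := by rw [hAdef]; linarith
  have key : A * (Real.log A - w) ≤ w ^ 2 * Real.log w := by
    rcases le_or_gt 1 w with h1 | h1
    · have hlw : 0 ≤ Real.log w := Real.log_nonneg h1
      have hAle : A ≤ Real.exp w := by rw [hAdef]; linarith
      have hlogA : Real.log A ≤ w := by
        calc Real.log A ≤ Real.log (Real.exp w) := Real.log_le_log hA hAle
          _ = w := Real.log_exp w
      have h1' : A * (Real.log A - w) ≤ 0 :=
        mul_nonpos_of_nonneg_of_nonpos hA.le (by linarith)
      nlinarith [mul_nonneg (sq_nonneg w) hlw]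
    · have hlw : Real.log w < 0 := Real.log_neg hw h1
      have hup : A ≤ 3 / 4 * w ^ 2 := by
        have hb := Real.exp_bound (x := w) (by rw [abs_of_pos hw]; linarith)
          (n := 2) (by norm_num)
        have hsum : ∑ i ∈ Finset.range 2, w ^ i / (Nat.factorial i : ℝ) = 1 + w := by
          simp [Finset.sum_range_succ, Nat.factorial]
        rw [hsum, abs_of_pos hw] at hb
        have habs : Real.exp w - (1 + w) ≤ |Real.exp w - (1 + w)| := le_abs_self _
        have : |Real.exp w - (1 + w)| ≤ w ^ 2 * (3 / 4) := by
          convert hb using 2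
          norm_num [Nat.factorial]
        rw [hAdef]; nlinarith
      have hlo : w ^ 2 / 2 ≤ A := by
        have hb := Real.sum_le_exp_of_nonneg hw.le 3
        have hsum : ∑ i ∈ Finset.range 3, w ^ i / (Nat.factorial i : ℝ)
            = 1 + w + w ^ 2 / 2 := by
          norm_num [Finset.sum_range_succ, Nat.factorial]
        rw [hsum] at hb
        rw [hAdef]; linarith
      have hlogA : Real.log A - w ≤ 2 * Real.log w := by
        have hle : Real.log A ≤ Real.log (3 / 4 * w ^ 2) := Real.log_le_log hA hup
        rw [Real.log_mul (by norm_num) (by positivity), Real.log_pow] at hle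
        have h34 : Real.log (3 / 4) < 0 := Real.log_neg (by norm_num) (by norm_num)
        push_cast at hle
        linarith
      calc A * (Real.log A - w) ≤ A * (2 * Real.log w) :=
            mul_le_mul_of_nonneg_left hlogA hA.le
        _ ≤ (w ^ 2 / 2) * (2 * Real.log w) :=
            mul_le_mul_of_nonpos_right hlo (by linarith)
        _ = w ^ 2 * Real.log w := by ring
  have hkey' : Real.log A - w ≤ w ^ 2 * Real.log w / A := by
    rw [le_div_iff₀ hA]; nlinarith [key]
  have hfrac : w * (Real.exp w - 1) / A * Real.log w
      = w * Real.log w + w ^ 2 * Real.log w / A := by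
    have h : Real.exp w - 1 = A + w := by rw [hAdef]; ring
    rw [h]; field_simp
  unfold Upsilon
  rw [← hAdef, hfrac]
  linarith
end

section
/- For every real w > 2.5, Υ(w) ≤ w(ln w − 1) + 1; that is, (w(e^w − 1)/(e^w − 1 − w))·ln w − ln(e^w − 1 − w) ≤ w ln w − w + 1. -/
open Real Set

/-- lower bound on `log` via rational powers -/
lemma log_ge_of_pow_le {x q : ℝ} (n : ℕ) (hq : 0 < q) (h : q ^ n ≤ x) :
    (n : ℝ) * (1 - 1 / q) ≤ Real.log x := by
  have hx : 0 < x := lt_of_lt_of_le (pow_pos hq n) h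
  have h1 : 1 - q⁻¹ ≤ Real.log q := Real.one_sub_inv_le_log_of_pos hq
  have h2 : (n : ℝ) * Real.log q ≤ Real.log x := by
    rw [← Real.log_pow]
    exact Real.log_le_log (pow_pos hq n) h
  have hn : (0:ℝ) ≤ (n : ℝ) := Nat.cast_nonneg n
  have h1' : 1 - 1 / q ≤ Real.log q := by rw [one_div]; exact h1
  exact le_trans (mul_le_mul_of_nonneg_left h1' hn) h2

/-- upper bound on `log` via rational powers -/
lemma log_le_of_le_pow {x q : ℝ} (n : ℕ) (hx : 0 < x) (hq : 0 < q) (h : x ≤ q ^ n) :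
    Real.log x ≤ (n : ℝ) * (q - 1) := by
  have h1 : Real.log q ≤ q - 1 := Real.log_le_sub_one_of_pos hq
  have h2 : Real.log x ≤ (n : ℝ) * Real.log q := by
    rw [← Real.log_pow]
    exact Real.log_le_log hx h
  have hn : (0:ℝ) ≤ (n : ℝ) := Nat.cast_nonneg n
  nlinarith [mul_le_mul_of_nonneg_left h1 hn]

/-- degree-4 Taylor lower bound for `exp` -/
lemma exp_ge_T4 {x : ℝ} (hx : 0 ≤ x) :
    1 + x + x ^ 2 / 2 + x ^ 3 / 6 + x ^ 4 / 24 ≤ Real.exp x := by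
  have h := Real.sum_le_exp_of_nonneg hx 5
  simp only [Finset.sum_range_succ, Finset.sum_range_zero, Nat.factorial] at h
  norm_num at h
  linarith

/-- `log x ≤ 0.368 x` for `x ≥ 2.5` -/
lemma log_le_c_mul {x : ℝ} (hx : (2.5:ℝ) ≤ x) : Real.log x ≤ 0.368 * x := by
  have hx0 : (0:ℝ) < x := by linarith
  have h1 : Real.log (x / Real.exp 1) ≤ x / Real.exp 1 - 1 :=
    Real.log_le_sub_one_of_pos (by positivity)
  rw [Real.log_div hx0.ne' (Real.exp_ne_zero 1), Real.log_exp] at h1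
  have h2 : x / Real.exp 1 ≤ 0.368 * x := by
    rw [div_le_iff₀ (Real.exp_pos 1)]
    nlinarith [Real.exp_one_gt_d9]
  linarith

/-- the key function -/
noncomputable def fkey (w : ℝ) : ℝ :=
  (Real.exp w - 1 - w) * (Real.log (Real.exp w - 1 - w) + 1 - w) - w ^ 2 * Real.log w

lemma Epos {x : ℝ} (hx : (2.5:ℝ) ≤ x) : 0 < Real.exp x - 1 - x := by
  have := Real.add_one_lt_exp (x := x) (by linarith)
  linarith

lemma fkey_hasDeriv {x : ℝ} (hx : (2.5:ℝ) ≤ x) :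
    HasDerivAt fkey
      ((Real.exp x - 1) * (Real.log (Real.exp x - 1 - x) + 1 - x) +
        (Real.exp x - 1 - x) * ((Real.exp x - 1) / (Real.exp x - 1 - x) - 1) -
        (2 * x * Real.log x + x)) x := by
  have hx0 : (0:ℝ) < x := by linarith
  have hE : 0 < Real.exp x - 1 - x := Epos hx
  have h1 : HasDerivAt (fun w : ℝ => Real.exp w - 1 - w) (Real.exp x - 1) x := by
    exact ((Real.hasDerivAt_exp x).sub_const 1).sub (hasDerivAt_id x)
  have h2 : HasDerivAt (fun w : ℝ => Real.log (Real.exp w - 1 - w))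
      ((Real.exp x - 1) / (Real.exp x - 1 - x)) x := h1.log hE.ne'
  have h3 : HasDerivAt (fun w : ℝ => Real.log (Real.exp w - 1 - w) + 1 - w)
      ((Real.exp x - 1) / (Real.exp x - 1 - x) - 1) x := by
    exact (h2.add_const 1).sub (hasDerivAt_id x)
  have h4 := h1.mul h3
  have h5 : HasDerivAt (fun w : ℝ => w ^ 2 * Real.log w) (2 * x * Real.log x + x) x := by
    have h : HasDerivAt (fun w : ℝ => w ^ 2 * Real.log w) (↑2 * x ^ (2 - 1) * Real.log x + x ^ 2 * x⁻¹) x := (hasDerivAt_pow 2 x).mul (Real.hasDerivAt_log hx0.ne')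
    convert h using 1
    push_cast
    field_simp
  exact h4.sub h5

lemma fkey_deriv_nonneg {x : ℝ} (hx : (2.5:ℝ) ≤ x) :
    0 ≤ (Real.exp x - 1) * (Real.log (Real.exp x - 1 - x) + 1 - x) +
        (Real.exp x - 1 - x) * ((Real.exp x - 1) / (Real.exp x - 1 - x) - 1) -
        (2 * x * Real.log x + x) := by
  have hx0 : (0:ℝ) < x := by linarith
  have hE : 0 < Real.exp x - 1 - x := Epos hx
  set E := Real.exp x - 1 - x with hEdef
  set L := Real.log E with hLdef
  have hmid : E * ((Real.exp x - 1) / E - 1) = x := by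
    field_simp
    rw [hEdef]
    ring
  rw [hmid]
  have hT4 : 1 + x + x ^ 2 / 2 + x ^ 3 / 6 + x ^ 4 / 24 ≤ Real.exp x := exp_ge_T4 hx0.le
  have h25 : (0:ℝ) ≤ x - 2.5 := by linarith
  -- x + x^2 ≤ 1.44 E
  have h3 : x + x ^ 2 ≤ 1.44 * E := by
    rw [hEdef]
    nlinarith [mul_nonneg (mul_nonneg h25 h25) h25, mul_nonneg h25 h25,
      mul_nonneg (mul_nonneg (mul_nonneg h25 h25) h25) h25]
  -- 2.44 + 0.736 x^2 ≤ E
  have h4' : 2.44 + 0.736 * x ^ 2 ≤ E := by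
    rw [hEdef]
    nlinarith [mul_nonneg (mul_nonneg h25 h25) h25, mul_nonneg h25 h25,
      mul_nonneg (mul_nonneg (mul_nonneg h25 h25) h25) h25]
  -- E*x - (1+x) ≤ E*L
  have h1' : E * x - (1 + x) ≤ E * L := by
    have hy : (0:ℝ) < E * Real.exp (-x) := by positivity
    have hlog := Real.one_sub_inv_le_log_of_pos hy
    rw [Real.log_mul hE.ne' (Real.exp_ne_zero _), Real.log_exp] at hlog
    have hinv : (E * Real.exp (-x))⁻¹ = Real.exp x / E := by
      rw [Real.exp_neg, mul_inv, inv_inv]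
      ring
    rw [hinv] at hlog
    -- hlog : 1 - exp x / E ≤ L + (-x)
    have hmul := mul_le_mul_of_nonneg_left hlog hE.le
    have hid : E * (1 - Real.exp x / E) = E - Real.exp x := by
      field_simp
    have hEx : E - Real.exp x = -(1 + x) := by rw [hEdef]; ring
    nlinarith [hmul]
  -- log x ≤ 0.368 x
  have h2 : Real.log x ≤ 0.368 * x := log_le_c_mul hx
  have hlogx0 : 0 ≤ Real.log x := Real.log_nonneg (by linarith)
  -- assemble
  have hEx1 : Real.exp x - 1 = E + x := by rw [hEdef]; ring
  rw [hEx1]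
  have hA : (E + x) * (E * x - (1 + x)) ≤ (E + x) * (E * L) :=
    mul_le_mul_of_nonneg_left h1' (by linarith)
  have hB : 2 * x * E * Real.log x ≤ 2 * x * E * (0.368 * x) :=
    mul_le_mul_of_nonneg_left h2 (by positivity)
  have hC : E * (2.44 + 0.736 * x ^ 2) ≤ E * E :=
    mul_le_mul_of_nonneg_left h4' hE.le
  nlinarith [hA, hB, hC, h3, hE, mul_pos hE hx0]

lemma fkey_at_25 : 0 ≤ fkey 2.5 := by
  have hs2 : Real.exp 0.5 * Real.exp 0.5 = Real.exp 1 := by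
    rw [← Real.exp_add]; norm_num
  have he1 := Real.exp_one_gt_d9
  have hs : (1.64872127 : ℝ) ≤ Real.exp 0.5 := by
    nlinarith [Real.exp_pos (0.5:ℝ)]
  have hsplit : Real.exp (2.5:ℝ) = Real.exp 1 * Real.exp 1 * Real.exp 0.5 := by
    rw [← Real.exp_add, ← Real.exp_add]; norm_num
  have hx25 : (2.7182818283:ℝ) ^ 2 * 1.64872127 ≤ Real.exp 2.5 := by
    rw [hsplit]
    have h11 : (2.7182818283:ℝ) * 2.7182818283 ≤ Real.exp 1 * Real.exp 1 :=
      mul_le_mul he1.le he1.le (by norm_num) (Real.exp_pos 1).le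
    nlinarith [Real.exp_pos (0.5:ℝ), Real.exp_pos (1:ℝ)]
  set E := Real.exp (2.5:ℝ) - 1 - 2.5 with hEdef
  have hElo : (2.7182818283:ℝ) ^ 2 * 1.64872127 - 3.5 ≤ E := by
    rw [hEdef]; linarith
  have hElo_pos : (0:ℝ) < 2.7182818283 ^ 2 * 1.64872127 - 3.5 := by norm_num
  have hEpos : (0:ℝ) < E := lt_of_lt_of_le hElo_pos hElo
  -- lower bound on log E
  have hq1 : ((1.0005278025:ℝ)) ^ (4096:ℕ) ≤ E := by
    refine le_trans ?_ hElo
    rw [show (4096:ℕ) = 16 * 16 * 16 by norm_num, pow_mul, pow_mul]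
    norm_num
  have hLE : ((4096:ℕ):ℝ) * (1 - 1 / 1.0005278025) ≤ Real.log E :=
    log_ge_of_pow_le 4096 (by norm_num) hq1
  -- upper bound on log 2.5
  have hq2 : (2.5:ℝ) ≤ (1.0004475077:ℝ) ^ (2048:ℕ) := by
    rw [show (2048:ℕ) = 8 * 16 * 16 by norm_num, pow_mul, pow_mul]
    norm_num
  have hU : Real.log (2.5:ℝ) ≤ ((2048:ℕ):ℝ) * (1.0004475077 - 1) :=
    log_le_of_le_pow 2048 (by norm_num) (by norm_num) hq2
  have hL15 : (1.5:ℝ) ≤ ((4096:ℕ):ℝ) * (1 - 1 / 1.0005278025) := by norm_num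
  -- final numeric combination
  have hnum : (6.25:ℝ) * (((2048:ℕ):ℝ) * (1.0004475077 - 1)) ≤
      ((2.7182818283:ℝ) ^ 2 * 1.64872127 - 3.5) *
        (((4096:ℕ):ℝ) * (1 - 1 / 1.0005278025) - 1.5) := by norm_num
  show 0 ≤ E * (Real.log E + 1 - 2.5) - (2.5:ℝ) ^ 2 * Real.log 2.5
  have hstep : ((2.7182818283:ℝ) ^ 2 * 1.64872127 - 3.5) *
      (((4096:ℕ):ℝ) * (1 - 1 / 1.0005278025) - 1.5) ≤ E * (Real.log E - 1.5) := by
    apply mul_le_mul hElo (by linarith) (by linarith) hEpos.le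
  nlinarith [hstep, hnum, hU]

/-- For every `w > 2.5`, `Υ(w) ≤ w(ln w - 1) + 1`. -/
theorem upsilon_upper_bound (w : ℝ) (hw : 2.5 < w) :
    Upsilon w ≤ w * (Real.log w - 1) + 1 := by
  have hE : 0 < Real.exp w - 1 - w := Epos hw.le
  -- f is monotone on [2.5, ∞)
  have hmono : MonotoneOn fkey (Set.Ici (2.5:ℝ)) := by
    apply monotoneOn_of_deriv_nonneg (convex_Ici _)
    · exact fun x hx => (fkey_hasDeriv hx).continuousAt.continuousWithinAt
    · intro x hx
      rw [interior_Ici] at hx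
      exact (fkey_hasDeriv (le_of_lt hx)).differentiableAt.differentiableWithinAt
    · intro x hx
      rw [interior_Ici] at hx
      rw [(fkey_hasDeriv (le_of_lt hx)).deriv]
      exact fkey_deriv_nonneg (le_of_lt hx)
  have hfw : 0 ≤ fkey w := by
    have := hmono self_mem_Ici (mem_Ici.mpr hw.le) hw.le
    have h25 := fkey_at_25
    linarith
  have key : w ^ 2 * Real.log w ≤
      (Real.exp w - 1 - w) * (Real.log (Real.exp w - 1 - w) + 1 - w) := by
    have : fkey w = (Real.exp w - 1 - w) * (Real.log (Real.exp w - 1 - w) + 1 - w)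
        - w ^ 2 * Real.log w := rfl
    linarith [hfw, this.symm.le]
  unfold Upsilon
  rw [sub_le_iff_le_add, div_mul_eq_mul_div, div_le_iff₀ hE]
  nlinarith [key, hE]
end

section
/- For every real w > 0 satisfying w(e^w − 1)/(e^w − 1 − w) ≤ 3 (equivalently, w(e^w − 1) ≤ 3(e^w − 1 − w)), one has Υ(w) ≤ ln 2. -/
lemma taylor5_le_exp (w : ℝ) (hw : 0 ≤ w) :
    1 + w + w^2/2 + w^3/6 + w^4/24 + w^5/120 ≤ Real.exp w := by
  have := Real.sum_le_exp_of_nonneg hw 6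
  norm_num [Finset.sum_range_succ, Nat.factorial] at this
  linarith

lemma exp_upper (w : ℝ) (h0 : 0 ≤ w) (h1 : w ≤ 1) :
    Real.exp w ≤ 1 + w + w^2/2 + w^3/6 + 5*w^4/96 := by
  have := Real.exp_bound' h0 h1 (n := 4) (by norm_num)
  simp [Finset.sum_range_succ, Nat.factorial] at this
  calc Real.exp w ≤ _ := this
    _ ≤ _ := by norm_num; ring_nf; nlinarith [pow_nonneg h0 4]

/-- For `w > 0` with `w(e^w - 1)/(e^w - 1 - w) ≤ 3`, one has `Υ(w) ≤ ln 2`. -/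
theorem upsilon_le_log_two (w : ℝ) (hw : 0 < w)
    (h3 : w * (Real.exp w - 1) ≤ 3 * (Real.exp w - 1 - w)) :
    Upsilon w ≤ Real.log 2 := by
  set E := Real.exp w with hE
  have hD : 0 < E - 1 - w := by
    have := Real.add_one_lt_exp (ne_of_gt hw)
    linarith
  have hT := taylor5_le_exp w hw.le
  have hDhalf : w^2/2 ≤ E - 1 - w := by nlinarith [pow_nonneg hw.le 3, pow_nonneg hw.le 4, pow_nonneg hw.le 5]
  rcases le_total w 1 with h1 | h1
  · -- case w ≤ 1
    have hEu := exp_upper w hw.le h1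
    -- r ≥ 2
    have hr2 : 2 * (E - 1 - w) ≤ w * (E - 1) := by
      nlinarith [pow_nonneg hw.le 3, pow_nonneg hw.le 4, sq_nonneg w, mul_nonneg (pow_nonneg hw.le 4) (sub_nonneg.2 h1)]
    have hlw : Real.log w ≤ 0 := Real.log_nonpos hw.le h1
    have hr2' : 2 ≤ w * (E - 1) / (E - 1 - w) := (le_div_iff₀ hD).2 (by linarith)
    have hlogD : 2 * Real.log w - Real.log 2 ≤ Real.log (E - 1 - w) := by
      have h := Real.log_le_log (by positivity : (0:ℝ) < w^2/2) hDhalf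
      rw [Real.log_div (by positivity) (by norm_num), Real.log_pow] at h
      push_cast at h
      linarith
    have : w * (E - 1) / (E - 1 - w) * Real.log w ≤ 2 * Real.log w := by
      nlinarith
    unfold Upsilon
    rw [← hE]
    linarith
  · -- case w ≥ 1
    have hr3 : w * (E - 1) / (E - 1 - w) ≤ 3 := (div_le_iff₀ hD).2 (by linarith)
    have hlw : 0 ≤ Real.log w := Real.log_nonneg h1
    have hcube : w^3 ≤ 2 * (E - 1 - w) := by
      nlinarith [sq_nonneg (w - 7/3), mul_nonneg (sub_nonneg.2 h1) (sq_nonneg (w - 7/3)), mul_nonneg (mul_nonneg (sub_nonneg.2 h1) (sub_nonneg.2 h1)) (sq_nonneg (w-7/3))]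
    have hlogD : 3 * Real.log w - Real.log 2 ≤ Real.log (E - 1 - w) := by
      have h := Real.log_le_log (by positivity : (0:ℝ) < w^3) hcube
      rw [Real.log_mul (by norm_num) (ne_of_gt hD), Real.log_pow] at h
      push_cast at h
      linarith
    have : w * (E - 1) / (E - 1 - w) * Real.log w ≤ 3 * Real.log w := by
      nlinarith
    unfold Upsilon
    rw [← hE]
    linarith
end

section
/- Let c > 0, let α, r, t be reals with 0 < α < 1, 0 < t < r < 1 and 1 − 3r + 2t > 0, and let y, z > 0 satisfy the implicit equations (e^y − 1 − y)/(e^y − 1) = y(1−α)/(3c(1−r)) and (e^z − 1 − z)/(e^z − 1) = zα/(3cr). Suppose furthermore that the three stationarity equations hold: (1−α)/α = 3(e^y − 1 − y)/(e^z − 1 − z); (1−r)/r = (3/2)·(y/z)·(1 − 3r + 2t)/(r − t); and (r − t)^3/(1 − 3r + 2t)^2 = 3t/4. Then z·(2(e^y − 1)^2 + 2(e^y − 1)(e^z − 1)) = y·(3(e^y − 1)^2 + (e^z − 1)^2). -/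
/-- At any stationary point of `f`, determined by the implicit equations for
`y, z` together with the three stationarity equations, the relation
`z(2(e^y-1)² + 2(e^y-1)(e^z-1)) = y(3(e^y-1)² + (e^z-1)²)` holds. -/
theorem stationary_point_equation (c α r t y z : ℝ)
    (hc : 0 < c)
    (hα : 0 < α) (hα1 : α < 1)
    (ht0 : 0 < t) (htr : t < r) (hr1 : r < 1)
    (hdom : 0 < 1 - 3 * r + 2 * t)
    (hy : 0 < y) (hz : 0 < z)
    (hyimp : (Real.exp y - 1 - y) / (Real.exp y - 1) = y * (1 - α) / (3 * c * (1 - r)))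
    (hzimp : (Real.exp z - 1 - z) / (Real.exp z - 1) = z * α / (3 * c * r))
    (hstat1 : (1 - α) / α = 3 * (Real.exp y - 1 - y) / (Real.exp z - 1 - z))
    (hstat2 : (1 - r) / r = 3 / 2 * (y / z) * ((1 - 3 * r + 2 * t) / (r - t)))
    (hstat3 : (r - t) ^ 3 / (1 - 3 * r + 2 * t) ^ 2 = 3 * t / 4) :
    z * (2 * (Real.exp y - 1) ^ 2 + 2 * (Real.exp y - 1) * (Real.exp z - 1)) =
      y * (3 * (Real.exp y - 1) ^ 2 + (Real.exp z - 1) ^ 2) := by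
  set Y := Real.exp y - 1 with hYdef
  set Z := Real.exp z - 1 with hZdef
  have hr0 : 0 < r := lt_trans ht0 htr
  have hr1' : 0 < 1 - r := by linarith
  have hα1' : 0 < 1 - α := by linarith
  have hs : 0 < r - t := by linarith
  have hey : y + 1 < Real.exp y := Real.add_one_lt_exp hy.ne'
  have hez : z + 1 < Real.exp z := Real.add_one_lt_exp hz.ne'
  have hY : 0 < Y := by simp only [hYdef]; linarith
  have hZ : 0 < Z := by simp only [hZdef]; linarith
  have hA : 0 < Y - y := by simp only [hYdef]; linarith
  have hB : 0 < Z - z := by simp only [hZdef]; linarith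
  -- cross-multiplied hypotheses
  rw [div_eq_div_iff hY.ne' (by positivity : (3 * c * (1 - r)) ≠ 0)] at hyimp
  rw [div_eq_div_iff hZ.ne' (by positivity : (3 * c * r) ≠ 0)] at hzimp
  have hBne : Real.exp z - 1 - z ≠ 0 := by simp only [hZdef] at hB ⊢; linarith
  rw [div_eq_div_iff hα.ne' hBne] at hstat1
  rw [div_eq_div_iff (by positivity : ((1 - 3 * r + 2 * t) ^ 2) ≠ 0) (by norm_num : (4:ℝ) ≠ 0)] at hstat3
  have hAY : Real.exp y - 1 - y = Y - y := by simp [hYdef]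
  have hBZ : Real.exp z - 1 - z = Z - z := by simp [hZdef]
  rw [hAY] at hyimp hstat1
  rw [hBZ] at hzimp hstat1
  -- step 1 : (1-r) Z z = 3 r Y y
  have key1 : (α * (Y - y)) * ((1 - r) * Z * z - 3 * r * Y * y) = 0 := by
    linear_combination (r * (Z - z)) * hyimp + (r * Y * y) * hstat1 -
      ((1 - r) * (Y - y)) * hzimp
  have h1 : (1 - r) * Z * z = 3 * r * Y * y := by
    rcases mul_eq_zero.mp key1 with h | h
    · exact absurd h (by positivity)
    · linarith
  -- step 2 : cross-multiply hstat2
  have hrne : r ≠ 0 := hr0.ne'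
  have hzne : z ≠ 0 := hz.ne'
  have hsne : r - t ≠ 0 := hs.ne'
  have e4 : (1 - r) * (2 * z * (r - t)) = 3 * y * (1 - 3 * r + 2 * t) * r := by
    field_simp at hstat2
    linarith
  have key2 : (3 * r * y) * (2 * Y * (r - t) - (1 - 3 * r + 2 * t) * Z) = 0 := by
    linear_combination Z * e4 - (2 * (r - t)) * h1
  have h2 : 2 * Y * (r - t) = (1 - 3 * r + 2 * t) * Z := by
    rcases mul_eq_zero.mp key2 with h | h
    · exact absurd h (by positivity)
    · linarith
  -- step 3 : (r-t) Z^2 = 3 t Y^2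
  have key3 : (4 * (r - t) ^ 2) * ((r - t) * Z ^ 2 - 3 * t * Y ^ 2) = 0 := by
    linear_combination Z ^ 2 * hstat3 -
      (3 * t * (2 * (r - t) * Y + (1 - 3 * r + 2 * t) * Z)) * h2
  have h3 : (r - t) * Z ^ 2 = 3 * t * Y ^ 2 := by
    rcases mul_eq_zero.mp key3 with h | h
    · exact absurd h (by positivity)
    · linarith
  -- conclusion
  have hne : (3 * Y * Z) ≠ 0 := by positivity
  apply mul_left_cancel₀ hne
  linear_combination (6 * Y ^ 3 + 9 * Y ^ 2 * Z + Z ^ 3) * h1 +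
    (Z * z + 3 * Y * y) * ((3 * Y ^ 2 + Z ^ 2) * h2 - (2 * Y + 2 * Z) * h3)
end

section
/- For every real y > 0, the set of z > 0 satisfying z·(2(e^y − 1)^2 + 2(e^y − 1)(e^z − 1)) = y·(3(e^y − 1)^2 + (e^z − 1)^2) consists of exactly two elements: z = y, and a unique value z* with z* > y. In particular no z with 0 < z < y satisfies this equation. -/
open Real Set

noncomputable def Hf (y a : ℝ) : ℝ → ℝ :=
  fun u => y/(2*a)*(u-a) + 2*a*y/(u+a) - Real.log (1+u)

lemma Hf_hasDeriv (y a u : ℝ) (ha : 0 < a) (hu : 0 < u) :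
    HasDerivAt (Hf y a) (y/(2*a) - 2*a*y/(u+a)^2 - 1/(1+u)) u := by
  have h1 : (u + a) ≠ 0 := by positivity
  have h2 : (1 + u) ≠ 0 := by positivity
  have d1 : HasDerivAt (fun u : ℝ => y/(2*a)*(u-a)) (y/(2*a)) u := by
    simpa using ((hasDerivAt_id u).sub_const a).const_mul (y/(2*a))
  have d2 : HasDerivAt (fun u : ℝ => 2*a*y/(u+a)) (-(2*a*y)/(u+a)^2) u := by
    have : HasDerivAt (fun u : ℝ => u + a) 1 u := (hasDerivAt_id u).add_const a
    simpa [div_eq_mul_inv, neg_div, mul_comm, mul_assoc, mul_left_comm] using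
      (this.inv h1).const_mul (2*a*y)
  have d3 : HasDerivAt (fun u : ℝ => Real.log (1+u)) (1/(1+u)) u := by
    have : HasDerivAt (fun u : ℝ => 1 + u) 1 u := (hasDerivAt_id u).const_add 1
    simpa using this.log h2
  have : HasDerivAt (Hf y a) _ u := (d1.add d2).sub d3
  convert this using 1
  ring

lemma Hf_deriv2 (y a u : ℝ) (ha : 0 < a) (hu : 0 < u) :
    HasDerivAt (fun u => y/(2*a) - 2*a*y/(u+a)^2 - 1/(1+u))
      (4*a*y/(u+a)^3 + 1/(1+u)^2) u := by
  have h1 : ((u + a)^2) ≠ 0 := by positivity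
  have h2 : (1 + u) ≠ 0 := by positivity
  have d2 : HasDerivAt (fun u : ℝ => 2*a*y/(u+a)^2) (-(2*a*y)*(2*(u+a))/((u+a)^2)^2) u := by
    have : HasDerivAt (fun u : ℝ => (u + a)^2) (2*(u+a)) u := by
      have h : HasDerivAt (fun u : ℝ => (u + a)^2) _ u := ((hasDerivAt_id u).add_const a).pow 2
      simpa using h
    simpa [div_eq_mul_inv, neg_div, mul_comm, mul_assoc, mul_left_comm] using
      (this.inv h1).const_mul (2*a*y)
  have d3 : HasDerivAt (fun u : ℝ => 1/(1+u)) (-1/(1+u)^2) u := by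
    have : HasDerivAt (fun u : ℝ => 1 + u) 1 u := (hasDerivAt_id u).const_add 1
    have h : HasDerivAt (fun u : ℝ => (1 + u)⁻¹) _ u := this.inv h2
    simpa [one_div] using h
  have : HasDerivAt (fun u => y/(2*a) - 2*a*y/(u+a)^2 - 1/(1+u)) _ u :=
    ((hasDerivAt_const u (y/(2*a))).sub d2).sub d3
  convert this using 1
  have h3 : (u + a) ≠ 0 := by positivity
  field_simp
  ring

lemma Hf_strictConvexOn (y a : ℝ) (hy : 0 < y) (ha : 0 < a) :
    StrictConvexOn ℝ (Set.Ioi 0) (Hf y a) := by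
  apply strictConvexOn_of_deriv2_pos (convex_Ioi 0)
  · exact fun u hu => (Hf_hasDeriv y a u ha hu).continuousAt.continuousWithinAt
  · intro u hu
    rw [interior_Ioi] at hu
    have heq : deriv (Hf y a) =ᶠ[nhds u]
        (fun u => y/(2*a) - 2*a*y/(u+a)^2 - 1/(1+u)) := by
      filter_upwards [eventually_gt_nhds hu] with v hv
      exact (Hf_hasDeriv y a v ha hv).deriv
    have : deriv^[2] (Hf y a) u = deriv (fun u => y/(2*a) - 2*a*y/(u+a)^2 - 1/(1+u)) u := by
      simp only [Function.iterate_succ, Function.iterate_zero, Function.comp_apply, id]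
      exact Filter.EventuallyEq.deriv_eq heq
    rw [this, (Hf_deriv2 y a u ha hu).deriv]
    have hu0 : (0:ℝ) < u := hu
    have h1 : (0:ℝ) < u + a := by linarith
    have h2 : (0:ℝ) < 1 + u := by linarith
    positivity

lemma Hf_zero_iff (y a z u : ℝ) (ha : 0 < a) (hu : 0 < u)
    (hlog : Real.log (1+u) = z) :
    Hf y a u = 0 ↔ z * (2*a^2 + 2*a*u) = y * (3*a^2 + u^2) := by
  have h1 : u + a ≠ 0 := by positivity
  have h2 : (2:ℝ)*a ≠ 0 := by positivity
  unfold Hf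
  rw [hlog, show y/(2*a)*(u-a) + 2*a*y/(u+a) - z
      = (y*(3*a^2+u^2) - z*(2*a^2+2*a*u)) / (2*a*(u+a)) by field_simp; ring,
    div_eq_zero_iff]
  constructor
  · rintro (h | h)
    · linarith
    · exact absurd h (by positivity)
  · intro h; left; linarith

lemma Hf_at_a (y a : ℝ) (ha : 0 < a) (hlog : Real.log (1+a) = y) :
    Hf y a a = 0 := by
  unfold Hf
  rw [hlog]
  have h1 : a + a ≠ 0 := by positivity
  field_simp
  ring

/-- For every `y > 0`, the positive solutions `z` of
`z(2(e^y-1)² + 2(e^y-1)(e^z-1)) = y(3(e^y-1)² + (e^z-1)²)` are exactly `z = y`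
together with a unique value `z* > y`; in particular no `z` with `0 < z < y`
is a solution. -/
theorem stationary_equation_two_solutions (y : ℝ) (hy : 0 < y) :
    (y * (2 * (Real.exp y - 1) ^ 2 + 2 * (Real.exp y - 1) * (Real.exp y - 1)) =
      y * (3 * (Real.exp y - 1) ^ 2 + (Real.exp y - 1) ^ 2)) ∧
    (∃! z : ℝ, y < z ∧
      z * (2 * (Real.exp y - 1) ^ 2 + 2 * (Real.exp y - 1) * (Real.exp z - 1)) =
        y * (3 * (Real.exp y - 1) ^ 2 + (Real.exp z - 1) ^ 2)) ∧
    (∀ z : ℝ, 0 < z → z < y →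
      z * (2 * (Real.exp y - 1) ^ 2 + 2 * (Real.exp y - 1) * (Real.exp z - 1)) ≠
        y * (3 * (Real.exp y - 1) ^ 2 + (Real.exp z - 1) ^ 2)) := by
  set a := Real.exp y - 1 with ha_def
  have ha : 0 < a := by
    have := Real.exp_lt_exp.mpr hy
    simp only [Real.exp_zero] at this
    rw [ha_def]; linarith
  have hlog_a : Real.log (1 + a) = y := by
    rw [show 1 + a = Real.exp y by rw [ha_def]; ring, Real.log_exp]
  have hiff : ∀ z : ℝ, 0 < z →
      (z * (2 * a ^ 2 + 2 * a * (Real.exp z - 1)) =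
        y * (3 * a ^ 2 + (Real.exp z - 1) ^ 2) ↔ Hf y a (Real.exp z - 1) = 0) := by
    intro z hz
    have hu : 0 < Real.exp z - 1 := by
      have := Real.exp_lt_exp.mpr hz
      simp only [Real.exp_zero] at this; linarith
    have hlog : Real.log (1 + (Real.exp z - 1)) = z := by
      rw [show 1 + (Real.exp z - 1) = Real.exp z by ring, Real.log_exp]
    exact (Hf_zero_iff y a z (Real.exp z - 1) ha hu hlog).symm
  clear_value a
  refine ⟨by ring, ?_, ?_⟩
  · -- unique solution with z > y
    have key : ∀ z1 z2 : ℝ, y < z1 → z1 < z2 →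
        Hf y a (Real.exp z1 - 1) = 0 → Hf y a (Real.exp z2 - 1) = 0 → False := by
      intro z1 z2 h1 h2 H1 H2
      set u1 := Real.exp z1 - 1 with hu1d
      set u2 := Real.exp z2 - 1 with hu2d
      have hau1 : a < u1 := by
        have := Real.exp_lt_exp.mpr h1
        rw [ha_def, hu1d]; linarith
      have hu12 : u1 < u2 := by
        have := Real.exp_lt_exp.mpr h2
        rw [hu1d, hu2d]; linarith
      have hconv := Hf_strictConvexOn y a hy ha
      have hane : a ≠ u2 := by linarith
      set t := (u2 - u1)/(u2 - a) with ht_def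
      set s := (u1 - a)/(u2 - a) with hs_def
      have hd : (0:ℝ) < u2 - a := by linarith
      have ht : 0 < t := by rw [ht_def]; apply div_pos <;> linarith
      have hs : 0 < s := by rw [hs_def]; apply div_pos <;> linarith
      have hts : t + s = 1 := by rw [ht_def, hs_def]; field_simp; ring
      have hcomb : t • a + s • u2 = u1 := by
        simp only [smul_eq_mul, ht_def, hs_def]
        field_simp; ring
      have hlt := hconv.2 (mem_Ioi.mpr ha) (mem_Ioi.mpr (by linarith : (0:ℝ) < u2))
        hane ht hs hts
      rw [hcomb, H1, H2, Hf_at_a y a ha hlog_a] at hlt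
      simp only [smul_eq_mul, mul_zero, add_zero] at hlt
      exact lt_irrefl 0 hlt
    -- existence: point where Hf is positive
    set sv := 4*a/y + a + 2 with hsv_def
    have h4ay : (0:ℝ) ≤ 4*a/y := by positivity
    have hsv2 : 2 ≤ sv := by rw [hsv_def]; linarith
    have hsva : a + 2 ≤ sv := by rw [hsv_def]; linarith
    clear_value sv
    set up := sv^2 - 1 with hup_def
    clear_value up
    have hsq : 2*(a+2) ≤ sv*sv := mul_le_mul hsv2 hsva (by linarith) (by linarith)
    have haup : a < up := by rw [hup_def]; nlinarith
    have hup0 : 0 < up := by linarith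
    have hHup : 0 < Hf y a up := by
      have h1up : 1 + up = sv^2 := by rw [hup_def]; ring
      have hlogup : Real.log (1 + up) ≤ 2*(sv - 1) := by
        rw [h1up, show sv^2 = sv*sv by ring,
          Real.log_mul (by linarith) (by linarith)]
        have := Real.log_le_sub_one_of_pos (show (0:ℝ) < sv by linarith)
        linarith
      have hysv : y * sv = 4*a + y*a + 2*y := by
        rw [hsv_def]; field_simp
      have hysv2 : y*(sv*sv) = (4*a + y*a + 2*y)*sv := by
        rw [← hysv]; ring
      have hmain : 2*(sv-1) < y/(2*a)*(up-a) := by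
        rw [div_mul_eq_mul_div, lt_div_iff₀ (by positivity : (0:ℝ) < 2*a)]
        have hyup : y*up = y*(sv*sv) - y := by rw [hup_def]; ring
        nlinarith [hyup, hysv2, mul_pos hy ha,
          mul_nonneg (mul_nonneg (by linarith : (0:ℝ) ≤ sv - 2) hy.le) ha.le,
          mul_nonneg (by linarith : (0:ℝ) ≤ sv - 2) hy.le]
      have hpos2 : 0 < 2*a*y/(up+a) := by positivity
      unfold Hf
      linarith
    -- point where Hf is negative, via the slope at a
    have hderiv_a : HasDerivAt (Hf y a) (-1/(1+a)) a := by
      have h := Hf_hasDeriv y a a ha ha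
      convert h using 1
      have h1 : a + a ≠ 0 := by positivity
      have h2 : (1:ℝ) + a ≠ 0 := by positivity
      field_simp
      ring
    have hslope := hasDerivAt_iff_tendsto_slope.mp hderiv_a
    have hnegev : ∀ᶠ v in nhdsWithin a ({a}ᶜ), slope (Hf y a) a v < 0 :=
      hslope.eventually
        (Iio_mem_nhds (div_neg_of_neg_of_pos (by norm_num) (by linarith)))
    have hmono : nhdsWithin a (Set.Ioi a) ≤ nhdsWithin a ({a}ᶜ) :=
      nhdsWithin_mono a (fun x hx => ne_of_gt hx)
    have hnegev' : ∀ᶠ v in nhdsWithin a (Set.Ioi a), slope (Hf y a) a v < 0 :=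
      hnegev.filter_mono hmono
    have hIoo : ∀ᶠ v in nhdsWithin a (Set.Ioi a), v ∈ Set.Ioo a up :=
      Filter.eventually_of_mem (Ioo_mem_nhdsGT_of_mem ⟨le_refl a, haup⟩)
        (fun x hx => hx)
    obtain ⟨um, humIoo, humslope⟩ := (hIoo.and hnegev').exists
    have hum_neg : Hf y a um < 0 := by
      rw [slope_def_field, Hf_at_a y a ha hlog_a, sub_zero, div_lt_iff₀
        (by linarith [humIoo.1] : (0:ℝ) < um - a)] at humslope
      linarith
    -- intermediate value
    have hcont : ContinuousOn (Hf y a) (Set.Icc um up) := by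
      intro v hv
      have : 0 < v := lt_of_lt_of_le (lt_trans ha humIoo.1) hv.1
      exact (Hf_hasDeriv y a v ha this).continuousAt.continuousWithinAt
    have h0mem : (0:ℝ) ∈ Set.Ioo (Hf y a um) (Hf y a up) := ⟨hum_neg, hHup⟩
    obtain ⟨ustar, hustarIoo, hHustar⟩ :=
      intermediate_value_Ioo (le_of_lt humIoo.2) hcont h0mem
    have hastar : a < ustar := lt_trans humIoo.1 hustarIoo.1
    have h1ustar : (0:ℝ) < 1 + ustar := by linarith
    set zstar := Real.log (1 + ustar) with hz_def
    have hexpz : Real.exp zstar = 1 + ustar := Real.exp_log h1ustar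
    have hzy : y < zstar := by
      rw [← hlog_a, hz_def]
      exact Real.log_lt_log (by linarith) (by linarith)
    have hz0 : 0 < zstar := lt_trans hy hzy
    have hustar_eq : Real.exp zstar - 1 = ustar := by rw [hexpz]; ring
    have hHzstar : Hf y a (Real.exp zstar - 1) = 0 := by rw [hustar_eq]; exact hHustar
    refine ⟨zstar, ⟨hzy, (hiff zstar hz0).mpr hHzstar⟩, ?_⟩
    rintro z ⟨hzy', hzeq⟩
    have hz0' : 0 < z := lt_trans hy hzy'
    have hHz : Hf y a (Real.exp z - 1) = 0 := (hiff z hz0').mp hzeq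
    by_contra hne
    rcases lt_or_gt_of_ne hne with h | h
    · exact key z zstar hzy' h hHz hHzstar
    · exact key zstar z hzy h hHzstar hHz
  · intro z hz hzy heq
    have hu : 0 < Real.exp z - 1 := by
      have := Real.exp_lt_exp.mpr hz
      simp only [Real.exp_zero] at this; linarith
    have hkey : 0 < a^2*((3*y+z)*(y-z)) := by
      have h1 : 0 < 3*y + z := by linarith
      have h2 : 0 < y - z := by linarith
      positivity
    nlinarith [sq_nonneg (y*(Real.exp z - 1) - a*z), hkey, mul_pos hy hy,
      mul_pos hy hu, mul_pos ha hu]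
end

section
/- Let c > 2/3 and let x > 0 satisfy 3c = x(e^x − 1)/(e^x − 1 − x). Define K = c(e^x − 1)^2 / ((e^x − 1)^2 + 3c(e^x − 1 − x e^x)). Then K > 0, the real symmetric 3×3 matrix A = [[16/3 + 16K, −16K, 0], [−16K, 24c + 16K, −32c], [0, −32c, 128c/3]] is positive definite, and det A = (2^15/9)·K·c. -/
lemma quad_aux (K c a b d : ℝ) (hK : 0 < K) (hc : 0 < c)
    (h : a ≠ 0 ∨ b ≠ 0 ∨ d ≠ 0) :
    0 < 16 * K * (a - b) ^ 2 + 16 / 3 * a ^ 2 + 8 * c / 3 * (3 * b - 4 * d) ^ 2 := by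
  have t1 : 0 ≤ 16 * K * (a - b) ^ 2 := by positivity
  have t2 : 0 ≤ 16 / 3 * a ^ 2 := by positivity
  have t3 : 0 ≤ 8 * c / 3 * (3 * b - 4 * d) ^ 2 := by positivity
  by_cases ha : a = 0
  · by_cases hab : a - b = 0
    · have hb : b = 0 := by rw [ha] at hab; linarith
      have hd : d ≠ 0 := by rcases h with h' | h' | h' <;> tauto
      have h4 : 3 * b - 4 * d ≠ 0 := by rw [hb]; intro hcon; apply hd; linarith
      have : 0 < 8 * c / 3 * (3 * b - 4 * d) ^ 2 :=
        mul_pos (by positivity) (lt_of_le_of_ne (sq_nonneg _) (Ne.symm (pow_ne_zero 2 h4)))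
      linarith
    · have : 0 < 16 * K * (a - b) ^ 2 :=
        mul_pos (by positivity) (lt_of_le_of_ne (sq_nonneg _) (Ne.symm (pow_ne_zero 2 hab)))
      linarith
  · have : 0 < 16 / 3 * a ^ 2 :=
      mul_pos (by norm_num) (lt_of_le_of_ne (sq_nonneg _) (Ne.symm (pow_ne_zero 2 ha)))
    linarith

/-- With `c > 2/3`, `x > 0` satisfying `3c = x(e^x-1)/(e^x-1-x)`, and
`K = c(e^x-1)²/((e^x-1)² + 3c(e^x-1-x·e^x))`, the constant `K` is positive, the
Hessian-type matrix `A` is positive definite, and `det A = (2¹⁵/9)·K·c`. -/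
theorem hessian_posDef_and_det (c x K : ℝ) (A : Matrix (Fin 3) (Fin 3) ℝ)
    (hc : 2 / 3 < c) (hx : 0 < x)
    (heq : 3 * c = x * (Real.exp x - 1) / (Real.exp x - 1 - x))
    (hK : K = c * (Real.exp x - 1) ^ 2 /
      ((Real.exp x - 1) ^ 2 + 3 * c * (Real.exp x - 1 - x * Real.exp x)))
    (hA : A = !![16 / 3 + 16 * K, -(16 * K), 0;
                 -(16 * K), 24 * c + 16 * K, -(32 * c);
                 0, -(32 * c), 128 * c / 3]) :
    0 < K ∧ A.PosDef ∧ A.det = 2 ^ 15 / 9 * K * c := by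
  set u := Real.exp x with hu
  have hu1 : x + 1 < u := by
    simpa [hu] using Real.add_one_lt_exp (ne_of_gt hx)
  have h1 : 0 < u - 1 - x := by linarith
  have hupos : 0 < u := Real.exp_pos x
  have hcpos : 0 < c := by linarith
  -- key inequality: x * exp(x/2) < exp x - 1
  have hsinh : x / 2 < Real.sinh (x / 2) := by
    rw [Real.self_lt_sinh_iff]; positivity
  have hhalf : Real.exp (x / 2) * Real.exp (x / 2) = u := by
    rw [← Real.exp_add]; norm_num [hu]
  have hhalfpos : 0 < Real.exp (x / 2) := Real.exp_pos _
  have h2 : x * Real.exp (x / 2) < u - 1 := by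
    have := Real.sinh_eq (x / 2)
    have hinv : Real.exp (-(x / 2)) * Real.exp (x / 2) = 1 := by
      rw [← Real.exp_add]; norm_num
    nlinarith [mul_lt_mul_of_pos_right hsinh hhalfpos]
  have hkey : x ^ 2 * u < (u - 1) ^ 2 := by
    nlinarith [mul_pos (sub_pos.mpr h2)
      (add_pos (by linarith : (0:ℝ) < u - 1) (mul_pos hx hhalfpos)), hhalf]
  have h3c : 3 * c * (u - 1 - x) = x * (u - 1) := by
    field_simp at heq; linarith
  set D := (u - 1) ^ 2 + 3 * c * (u - 1 - x * u) with hD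
  have hDmul : D * (u - 1 - x) = (u - 1) * ((u - 1) ^ 2 - x ^ 2 * u) := by
    rw [hD]; linear_combination (u - 1 - x * u) * h3c
  have hDpos : 0 < D := by
    have h4 : 0 < (u - 1) * ((u - 1) ^ 2 - x ^ 2 * u) := by
      apply mul_pos (by linarith) (by linarith)
    nlinarith
  have hKpos : 0 < K := by
    rw [hK]
    exact div_pos (mul_pos hcpos (pow_pos (by linarith) 2)) hDpos
  refine ⟨hKpos, Matrix.PosDef.of_dotProduct_mulVec_pos ?_ ?_, ?_⟩
  · subst hA
    ext i j
    fin_cases i <;> fin_cases j <;>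
      simp [Matrix.conjTranspose, Matrix.IsHermitian, Matrix.vecHead, Matrix.vecTail]
  · intro v hv
    have hv' : v 0 ≠ 0 ∨ v 1 ≠ 0 ∨ v 2 ≠ 0 := by
      by_contra h
      push_neg at h
      exact hv (funext fun i => by fin_cases i <;> simp [h.1, h.2.1, h.2.2])
    subst hA
    have hexpand : dotProduct (star v)
        (!![16 / 3 + 16 * K, -(16 * K), 0; -(16 * K), 24 * c + 16 * K, -(32 * c);
            0, -(32 * c), 128 * c / 3].mulVec v) =
        16 * K * (v 0 - v 1) ^ 2 + 16 / 3 * (v 0) ^ 2 + 8 * c / 3 * (3 * v 1 - 4 * v 2) ^ 2 := by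
      simp [Matrix.mulVec, dotProduct, Fin.sum_univ_three, Matrix.vecHead,
        Matrix.vecTail]
      ring
    rw [hexpand]
    exact quad_aux K c (v 0) (v 1) (v 2) hKpos hcpos hv'
  · subst hA
    rw [Matrix.det_fin_three]
    norm_num [Matrix.vecHead, Matrix.vecTail, Matrix.cons_val_two, Matrix.cons_val_one, Matrix.cons_val_zero]
    ring
end

section
/- For every real c with 0.67 ≤ c < 1, one has ln(16/27) − c·ln(4/3) − 2c·ln c − 2(1−c)·ln(1−c) ≤ 2(1−c)·ln 4 − 0.005. -/
/-- For `0.67 ≤ c < 1`,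
`ln(16/27) - c·ln(4/3) - 2c·ln c - 2(1-c)·ln(1-c) ≤ 2(1-c)·ln 4 - 0.005`. -/
theorem case3_bound (c : ℝ) (hc : 0.67 ≤ c) (hc1 : c < 1) :
    Real.log (16 / 27) - c * Real.log (4 / 3) - 2 * c * Real.log c -
        2 * (1 - c) * Real.log (1 - c) ≤
      2 * (1 - c) * Real.log 4 - 0.005 := by
  have hc0 : (0:ℝ) < c := by linarith
  have hx0 : (0:ℝ) < 1 - c := by linarith
  -- A : -2 c log c ≤ 2 (1-c)
  have hA : -(2 * c * Real.log c) ≤ 2 * (1 - c) := by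
    have h1 : Real.log (1/c) ≤ 1/c - 1 := Real.log_le_sub_one_of_pos (by positivity)
    rw [one_div, Real.log_inv] at h1
    have h2 : c * (-Real.log c) ≤ c * (c⁻¹ - 1) := mul_le_mul_of_nonneg_left h1 hc0.le
    have h3 : c * (c⁻¹ - 1) = 1 - c := by field_simp
    rw [h3] at h2
    nlinarith [h2]
  -- log (4/3) ≤ 2 * log (29/25)
  have hs : Real.log (4/3) ≤ 2 * Real.log (29/25) := by
    have h1 : Real.log (4/3) ≤ Real.log ((29/25)^2) := by
      apply Real.log_le_log (by norm_num)
      norm_num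
    rwa [Real.log_pow, Nat.cast_ofNat] at h1
  -- log(29/25) - log 4 - log (1-c) ≤ 29/(100 (1-c)) - 1
  have hlog : Real.log (29/25) - Real.log 4 - Real.log (1-c)
      ≤ 29/(100*(1-c)) - 1 := by
    have h1 : Real.log (29/(100*(1-c))) ≤ 29/(100*(1-c)) - 1 :=
      Real.log_le_sub_one_of_pos (by positivity)
    have h2 : Real.log (29/(100*(1-c)))
        = Real.log (29/25) - Real.log 4 - Real.log (1-c) := by
      rw [show (29:ℝ)/(100*(1-c)) = (29/100)/(1-c) by rw [div_div],
        Real.log_div (by norm_num) hx0.ne',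
        show (29:ℝ)/100 = (29/25)/4 by norm_num,
        Real.log_div (by norm_num) (by norm_num)]
    linarith [h2 ▸ h1]
  -- B
  have hB : (1-c) * Real.log (4/3) - 2*(1-c)*Real.log 4 - 2*(1-c)*Real.log (1-c)
      ≤ 29/50 - 2*(1-c) := by
    have h1 : (1-c) * Real.log (4/3) ≤ (1-c) * (2 * Real.log (29/25)) :=
      mul_le_mul_of_nonneg_left hs hx0.le
    have h2 : 2*(1-c)*(Real.log (29/25) - Real.log 4 - Real.log (1-c))
        ≤ 2*(1-c)*(29/(100*(1-c)) - 1) :=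
      mul_le_mul_of_nonneg_left hlog (by positivity)
    have h3 : 2*(1-c)*(29/(100*(1-c)) - 1) = 29/50 - 2*(1-c) := by
      field_simp; ring
    nlinarith [h1, h2, h3]
  -- C : log(16/27) ≤ log(4/3) - 2/3
  have hC : Real.log (16/27) ≤ Real.log (4/3) - 2/3 := by
    have h32 : (1:ℝ)/3 ≤ Real.log (3/2) := by
      have h1 : Real.log (2/3) ≤ 2/3 - 1 := Real.log_le_sub_one_of_pos (by norm_num)
      have h2 : Real.log (2/3) = -Real.log (3/2) := by
        rw [show (2:ℝ)/3 = (3/2)⁻¹ by norm_num, Real.log_inv]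
      linarith
    have h49 : Real.log (4/9) = -(2 * Real.log (3/2)) := by
      rw [show (4:ℝ)/9 = ((3/2)^2)⁻¹ by norm_num, Real.log_inv, Real.log_pow]
      push_cast; ring
    have hsplit : Real.log (16/27) = Real.log (4/3) + Real.log (4/9) := by
      rw [← Real.log_mul (by norm_num) (by norm_num)]; norm_num
    rw [hsplit, h49]; linarith
  -- assemble
  norm_num only
  nlinarith [hA, hB, hC]
end

section
/- For all natural numbers i and j, the number of functions f : Fin i → Fin j such that every fiber f⁻¹(y) has at least 2 elements satisfies 2^j · |{f : Fin i → Fin j : ∀ y, |f⁻¹(y)| ≥ 2}| ≤ C(i, 2j) · (2j)! · j^(i−2j), where C(i, 2j) is the binomial coefficient and, when i < 2j, j^(i−2j) may be interpreted via the convention that both sides vanish (C(i,2j) = 0). Equivalently, for i ≥ 2j: the number of partitions of i labeled elements into j labeled blocks each of size at least 2, namely S(i,j,2)·j!, is at most C(i,2j)·((2j)!/2^j)·j^(i−2j). -/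
open Finset Function

namespace Stirling2Aux

variable {i j : ℕ}

/-- The fiber of `f` over `y` as a finset. -/
def Fib (f : Fin i → Fin j) (y : Fin j) : Finset (Fin i) :=
  Finset.univ.filter (fun x => f x = y)

lemma mem_Fib {f : Fin i → Fin j} {y : Fin j} {x : Fin i} : x ∈ Fib f y ↔ f x = y := by
  simp [Fib]

variable {f : Fin i → Fin j}
  (hf : ∀ y : Fin j, 2 ≤ Nat.card {x : Fin i // f x = y})

include hf

lemma two_le_card (y : Fin j) : 2 ≤ (Fib f y).card := by
  have := hf y
  rwa [Nat.card_eq_fintype_card, Fintype.card_subtype] at this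

/-- The smallest element of the fiber. -/
noncomputable def aa (y : Fin j) : Fin i :=
  (Fib f y).min' (Finset.card_pos.mp (by have := two_le_card hf y; omega))

/-- The second smallest element of the fiber. -/
noncomputable def bb (y : Fin j) : Fin i :=
  ((Fib f y).erase (aa hf y)).min' (Finset.card_pos.mp (by
    rw [Finset.card_erase_of_mem (show aa hf y ∈ Fib f y from Finset.min'_mem _ _)]
    have := two_le_card hf y; omega))

lemma aa_mem (y : Fin j) : aa hf y ∈ Fib f y := Finset.min'_mem _ _

lemma bb_mem_erase (y : Fin j) : bb hf y ∈ (Fib f y).erase (aa hf y) :=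
  Finset.min'_mem _ _

lemma bb_mem (y : Fin j) : bb hf y ∈ Fib f y :=
  Finset.mem_of_mem_erase (bb_mem_erase hf y)

lemma ab_ne (y : Fin j) : aa hf y ≠ bb hf y :=
  fun h => (Finset.ne_of_mem_erase (bb_mem_erase hf y)) h.symm

/-- The pair map: given swap data `ε`, send `(y, k)` to one of the two chosen
elements of the fiber over `y`. -/
noncomputable def pfun (ε : Fin j → Bool) (q : Fin j × Fin 2) : Fin i :=
  if ε q.1 then (if q.2 = 0 then bb hf q.1 else aa hf q.1)
  else (if q.2 = 0 then aa hf q.1 else bb hf q.1)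

lemma f_pfun (ε : Fin j → Bool) (q : Fin j × Fin 2) : f (pfun hf ε q) = q.1 := by
  unfold pfun
  split <;> split <;>
    first
      | exact mem_Fib.mp (aa_mem hf q.1)
      | exact mem_Fib.mp (bb_mem hf q.1)

lemma pfun_injective (ε : Fin j → Bool) : Function.Injective (pfun hf ε) := by
  rintro ⟨y, k⟩ ⟨y', k'⟩ h
  have hy : y = y' := by
    have h1 := f_pfun hf ε (y, k)
    have h2 := f_pfun hf ε (y', k')
    rw [h] at h1
    exact h1.symm.trans h2
  subst hy
  have hab := ab_ne hf y
  fin_cases k <;> fin_cases k' <;> simp_all [pfun] <;>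
    cases hε : ε y <;> simp_all

/-- The pair embedding. -/
noncomputable def emb (ε : Fin j → Bool) : Fin j × Fin 2 ↪ Fin i :=
  ⟨pfun hf ε, pfun_injective hf ε⟩

omit hf

/-- The encoding map. -/
noncomputable def Phi (p : (Fin j → Bool) ×
    {f : Fin i → Fin j // ∀ y : Fin j, 2 ≤ Nat.card {x : Fin i // f x = y}}) :
    Σ e : Fin j × Fin 2 ↪ Fin i, ({x : Fin i // x ∉ Set.range e} → Fin j) :=
  ⟨emb p.2.2 p.1, fun x => p.2.1 x.1⟩

lemma Phi_injective : Function.Injective (Phi (i := i) (j := j)) := by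
  rintro ⟨ε, f, hf⟩ ⟨ε', f', hf'⟩ h
  have he : emb hf ε = emb hf' ε' := congrArg Sigma.fst h
  have hpf : ∀ q, pfun hf ε q = pfun hf' ε' q := fun q =>
    congrArg (fun e : Fin j × Fin 2 ↪ Fin i => e q) he
  obtain ⟨-, hg2⟩ := Sigma.mk.inj_iff.mp h
  rw [he] at hg2
  have hg3 := eq_of_heq hg2
  have hff : f = f' := by
    funext x
    by_cases hx : x ∈ Set.range (emb hf' ε')
    · obtain ⟨q, hq⟩ := hx
      have hx2 : x = pfun hf' ε' q := hq.symm
      have hx1 : x = pfun hf ε q := by rw [hx2, hpf q]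
      have e1 : f x = q.1 := by rw [hx1]; exact f_pfun hf ε q
      have e2 : f' x = q.1 := by rw [hx2]; exact f_pfun hf' ε' q
      rw [e1, e2]
    · exact congrFun hg3 ⟨x, hx⟩
  subst hff
  have hεε : ε = ε' := by
    funext y
    have h0 := hpf (y, 0)
    have hab := ab_ne hf y
    have haa : aa hf y = aa hf' y := rfl
    have hbb : bb hf y = bb hf' y := rfl
    cases hε : ε y <;> cases hε' : ε' y <;> simp_all [pfun]
  subst hεε
  rfl

end Stirling2Aux

/-- The number of ways to distribute `i` labeled elements into `j` labeled
buckets so that every bucket gets at least 2 elements, multiplied by `2^j`, is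
at most `C(i, 2j)·(2j)!·j^(i-2j)` (with natural subtraction; when `i < 2j` both
sides vanish since `C(i, 2j) = 0`). -/
theorem stirling2_upper_bound (i j : ℕ) :
    2 ^ j *
        Nat.card {f : Fin i → Fin j // ∀ y : Fin j, 2 ≤ Nat.card {x : Fin i // f x = y}} ≤
      Nat.choose i (2 * j) * Nat.factorial (2 * j) * j ^ (i - 2 * j) := by
  classical
  have hle := Nat.card_le_card_of_injective _ (Stirling2Aux.Phi_injective (i := i) (j := j))
  rw [Nat.card_prod] at hle
  have h1 : Nat.card (Fin j → Bool) = 2 ^ j := by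
    simp [Nat.card_eq_fintype_card]
  rw [h1] at hle
  refine le_trans hle (le_of_eq ?_)
  rw [Nat.card_eq_fintype_card, Fintype.card_sigma]
  have hterm : ∀ e : Fin j × Fin 2 ↪ Fin i,
      Fintype.card ({x : Fin i // x ∉ Set.range e} → Fin j) = j ^ (i - 2 * j) := by
    intro e
    rw [Fintype.card_fun, Fintype.card_fin, Fintype.card_subtype_compl,
      Set.card_range_of_injective e.injective, Fintype.card_prod, Fintype.card_fin,
      Fintype.card_fin, Fintype.card_fin, Nat.mul_comm j 2]
  simp only [hterm, Finset.sum_const, Finset.card_univ, smul_eq_mul]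
  rw [Fintype.card_embedding_eq]
  simp only [Fintype.card_prod, Fintype.card_fin]
  rw [Nat.mul_comm j 2, Nat.descFactorial_eq_factorial_mul_choose]
  ring
end
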